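/- arXiv:hep-th/0603116 — 7 statements merged into one kernel-verified Lean document; each statement's English description precedes it below -/
import Mathlib

section
/- Define B_{k,ℓ} := (-1)^k * ∑_{i=0}^{k} C(k,i) * B_{i+ℓ}, where B_j are the Bernoulli numbers. Then B_{k,ℓ} = B_{ℓ,k} for all k,ℓ ≥ 0. -/
/-!
Pascal's rule turns the defining sum into the recurrence
`B_{k+1,ℓ} = -(B_{k,ℓ+1} + B_{k,ℓ})`, and the boundary values agree:
`B_{0,ℓ} = B_ℓ`, while `B_{k,0} = B_k` because `∑_{i ≤ k} C(k,i) B_i = (-1)^k B_k`.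
Induction on `k`, applying the recurrence once in each variable, gives the symmetry.
-/

open Finset

theorem Finset.sum_range_succ_choose_succ_mul {R : Type*} [Semiring R] (f : ℕ → R) (k : ℕ) :
    ∑ i ∈ range (k + 2), ((k + 1).choose i : R) * f i
      = ∑ i ∈ range (k + 1), (k.choose i : R) * f (i + 1)
        + ∑ i ∈ range (k + 1), (k.choose i : R) * f i := by
  have extend : ∑ i ∈ range (k + 1), (k.choose i : R) * f i
      = ∑ i ∈ range (k + 2), (k.choose i : R) * f i := by
    simp [sum_range_succ _ (k + 1)]
  rw [extend, sum_range_succ' _ (k + 1), sum_range_succ' _ (k + 1)]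
  simp only [Nat.choose_succ_succ, Nat.cast_add, add_mul, sum_add_distrib, Nat.choose_zero_right]
  abel

theorem sum_range_succ_choose_mul_bernoulli (k : ℕ) :
    ∑ i ∈ range (k + 1), (k.choose i : ℚ) * bernoulli i = bernoulli' k := by
  rw [sum_range_succ, sum_bernoulli, Nat.choose_self, Nat.cast_one, one_mul]
  rcases eq_or_ne k 1 with rfl | hk
  · norm_num [bernoulli_one, bernoulli'_one]
  · rw [if_neg hk, zero_add, bernoulli_eq_bernoulli'_of_ne_one hk]

def bernoulliBinom (k l : ℕ) : ℚ :=
  (-1) ^ k * ∑ i ∈ range (k + 1), (k.choose i : ℚ) * bernoulli (i + l)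

theorem bernoulliBinom_zero_left (l : ℕ) : bernoulliBinom 0 l = bernoulli l := by
  simp [bernoulliBinom]

theorem bernoulliBinom_zero_right (k : ℕ) : bernoulliBinom k 0 = bernoulli k := by
  simp only [bernoulliBinom, add_zero, sum_range_succ_choose_mul_bernoulli,
    bernoulli'_eq_bernoulli, ← mul_assoc, ← mul_pow]
  norm_num

theorem bernoulliBinom_succ_left (k l : ℕ) :
    bernoulliBinom (k + 1) l = -(bernoulliBinom k (l + 1) + bernoulliBinom k l) := by
  simp only [bernoulliBinom, sum_range_succ_choose_succ_mul (fun j => bernoulli (j + l)),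
    add_right_comm _ 1 l, ← add_assoc]
  ring

theorem bernoulliBinom_comm (k l : ℕ) : bernoulliBinom k l = bernoulliBinom l k := by
  induction k generalizing l with
  | zero => rw [bernoulliBinom_zero_left, bernoulliBinom_zero_right]
  | succ k ih =>
    rw [bernoulliBinom_succ_left k l, ih (l + 1), ih l, bernoulliBinom_succ_left l k]
    ring

/-- Symmetry of `B_{k,ℓ} := (-1)^k ∑_{i=0}^k C(k,i) B_{i+ℓ}` in `k` and `ℓ`,
where `B_j` are the Bernoulli numbers with `B 1 = -1/2`. -/
theorem stmt_2 (k l : ℕ) :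
    (-1 : ℚ) ^ k * ∑ i ∈ Finset.range (k + 1), (k.choose i : ℚ) * bernoulli (i + l)
      = (-1 : ℚ) ^ l * ∑ i ∈ Finset.range (l + 1), (l.choose i : ℚ) * bernoulli (i + k) :=
  bernoulliBinom_comm k l
end

section
/- With B_{k,ℓ} := (-1)^k * ∑_{i=0}^{k} C(k,i) * B_{i+ℓ} built from Bernoulli numbers, one has ∑_{k=0}^{n} C(n,k) * B_{k,n-k} = (-1)^n for every n ≥ 0. -/
/-!
Read `b (i + l)` umbrally as the image of `(X + 1) ^ i * X ^ l` under the linear functional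
`X ^ m ↦ b m`. The left-hand side is then the image of
`∑ k, C(n,k) (-(X + 1)) ^ k X ^ (n - k) = (X - (X + 1)) ^ n = (-1) ^ n`, that is `(-1) ^ n * b 0`;
for the Bernoulli numbers `b 0 = 1`.
-/

open Finset

namespace Polynomial

variable {R : Type*} [CommRing R]

noncomputable def umbralEval (b : ℕ → R) : R[X] →ₗ[R] R :=
  lsum fun m => LinearMap.mulRight R (b m)

theorem umbralEval_C_mul_X_pow (b : ℕ → R) (a : R) (m : ℕ) :
    umbralEval b (C a * X ^ m) = a * b m := by
  rw [C_mul_X_pow_eq_monomial, umbralEval, lsum_apply, sum_monomial_index] <;> simp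

theorem umbralEval_C (b : ℕ → R) (a : R) : umbralEval b (C a) = a * b 0 := by
  simpa using umbralEval_C_mul_X_pow b a 0

theorem umbralEval_X_add_one_pow_mul_X_pow (b : ℕ → R) (k l : ℕ) :
    umbralEval b ((X + 1) ^ k * X ^ l) = ∑ i ∈ range (k + 1), (k.choose i : R) * b (i + l) := by
  rw [add_pow, sum_mul, map_sum]
  refine sum_congr rfl fun i _ => ?_
  rw [show X ^ i * 1 ^ (k - i) * (k.choose i : R[X]) * X ^ l = C (k.choose i : R) * X ^ (i + l) by
    rw [one_pow, mul_one, map_natCast, pow_add]; ring, umbralEval_C_mul_X_pow]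

end Polynomial

open Polynomial in
theorem sum_choose_mul_neg_one_pow_mul_sum_choose {R : Type*} [CommRing R] (b : ℕ → R) (n : ℕ) :
    ∑ k ∈ range (n + 1), (n.choose k : R) *
      ((-1) ^ k * ∑ i ∈ range (k + 1), (k.choose i : R) * b (i + (n - k))) = (-1) ^ n * b 0 := by
  calc _ = umbralEval b ((-(X + 1) + X) ^ n) := by
        rw [add_pow, map_sum]
        refine sum_congr rfl fun k _ => ?_
        have hterm : (-(X + 1)) ^ k * X ^ (n - k) * (n.choose k : R[X])
            = C ((n.choose k : R) * (-1) ^ k) * ((X + 1) ^ k * X ^ (n - k)) := by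
          rw [neg_pow, C_mul, map_natCast, C_pow, C_neg, C_1]
          ring
        rw [hterm, C_mul', map_smul, smul_eq_mul, umbralEval_X_add_one_pow_mul_X_pow, mul_assoc]
    _ = (-1) ^ n * b 0 := by
        rw [show -(X + 1) + X = C (-1 : R) by rw [C_neg, C_1]; ring, ← C_pow, umbralEval_C]

/-- Diagonal identity `∑_{k=0}^n C(n,k) B_{k,n-k} = (-1)^n` for
`B_{k,ℓ} := (-1)^k ∑_{i=0}^k C(k,i) B_{i+ℓ}` built from Bernoulli numbers. -/
theorem stmt_3 (n : ℕ) :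
    ∑ k ∈ Finset.range (n + 1), (n.choose k : ℚ) *
      ((-1 : ℚ) ^ k * ∑ i ∈ Finset.range (k + 1), (k.choose i : ℚ) * bernoulli (i + (n - k)))
      = (-1 : ℚ) ^ n := by
  rw [sum_choose_mul_neg_one_pow_mul_sum_choose, bernoulli_zero, mul_one]
end

section
/- Let B(x,y) = (x-y)/(e^x - e^y) as a two-variable formal power series, and define B^{(R)}(x,y,z) = (B(x,y) - B(x,z))/(y - z) and B^{(L)}(x,y,z) = (B(x,z) - B(y,z))/(x - y) (both are formal power series since the numerators vanish on the respective diagonals). Then B^{(R)}(x,y,z) * B(y,z) = B(x,y) * B^{(L)}(x,y,z). -/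
/-! Only the cocycle relation `(e^x - e^y) + (e^y - e^z) = e^x - e^z` of the denominators matters.
After dividing by `B(x,y) B(x,z) B(y,z)` it says `B(x,y) B(y,z) (x-z) = B(x,z) B(y,z) (x-y) +
B(x,y) B(x,z) (y-z)`, and clearing the denominators `y-z`, `x-y` of the divided differences turns the
claimed identity into exactly this relation. Formal power series in finitely many variables over `ℚ`
form a domain, and the differences `x_i - x_j` are nonzero, so all these cancellations are legitimate. -/

open MvPowerSeries

/-- The exponential `e^{x_i}` of a single variable, as a formal power series
in three commuting variables over `ℚ`. -/
noncomputable def expX (i : Fin 3) : MvPowerSeries (Fin 3) ℚ :=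
  fun s => if s = Finsupp.single i (s i) then (1 : ℚ) / (s i).factorial else 0

section DividedDifference

variable {R : Type*} [CommRing R] [NoZeroDivisors R] {x₀ x₁ x₂ e₀ e₁ e₂ b₀₁ b₀₂ b₁₂ : R}

theorem mul_sub_add_mul_sub_eq_of_mul_sub_eq
    (h₀₁ : b₀₁ * (e₀ - e₁) = x₀ - x₁) (h₀₂ : b₀₂ * (e₀ - e₂) = x₀ - x₂)
    (h₁₂ : b₁₂ * (e₁ - e₂) = x₁ - x₂)
    (hx₀₁ : x₀ - x₁ ≠ 0) (hx₀₂ : x₀ - x₂ ≠ 0) (hx₁₂ : x₁ - x₂ ≠ 0) :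
    b₀₁ * b₁₂ * (x₀ - x₂) = b₀₂ * b₁₂ * (x₀ - x₁) + b₀₁ * b₀₂ * (x₁ - x₂) := by
  have he₀₁ : e₀ - e₁ ≠ 0 := right_ne_zero_of_mul (h₀₁ ▸ hx₀₁)
  have he₀₂ : e₀ - e₂ ≠ 0 := right_ne_zero_of_mul (h₀₂ ▸ hx₀₂)
  have he₁₂ : e₁ - e₂ ≠ 0 := right_ne_zero_of_mul (h₁₂ ▸ hx₁₂)
  refine mul_right_cancel₀ (mul_ne_zero (mul_ne_zero he₀₁ he₀₂) he₁₂) ?_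
  calc b₀₁ * b₁₂ * (x₀ - x₂) * ((e₀ - e₁) * (e₀ - e₂) * (e₁ - e₂))
      = b₀₁ * (e₀ - e₁) * (b₁₂ * (e₁ - e₂)) * (x₀ - x₂) * (e₀ - e₂) := by ring
    _ = (x₀ - x₁) * (x₁ - x₂) * (x₀ - x₂) * ((e₀ - e₁) + (e₁ - e₂)) := by rw [h₀₁, h₁₂]; ring
    _ = b₀₂ * (e₀ - e₂) * (b₁₂ * (e₁ - e₂)) * (x₀ - x₁) * (e₀ - e₁)
          + b₀₁ * (e₀ - e₁) * (b₀₂ * (e₀ - e₂)) * (x₁ - x₂) * (e₁ - e₂) := by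
      rw [h₀₁, h₀₂, h₁₂]; ring
    _ = (b₀₂ * b₁₂ * (x₀ - x₁) + b₀₁ * b₀₂ * (x₁ - x₂)) * ((e₀ - e₁) * (e₀ - e₂) * (e₁ - e₂)) := by
      ring

variable {bR bL : R}

theorem mul_eq_mul_of_divided_differences
    (hR : bR * (x₁ - x₂) = b₀₁ - b₀₂) (hL : bL * (x₀ - x₁) = b₀₂ - b₁₂)
    (hb : b₀₁ * b₁₂ * (x₀ - x₂) = b₀₂ * b₁₂ * (x₀ - x₁) + b₀₁ * b₀₂ * (x₁ - x₂))
    (hx₀₁ : x₀ - x₁ ≠ 0) (hx₁₂ : x₁ - x₂ ≠ 0) :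
    bR * b₁₂ = b₀₁ * bL := by
  refine mul_right_cancel₀ (mul_ne_zero hx₀₁ hx₁₂) ?_
  linear_combination b₁₂ * (x₀ - x₁) * hR - b₀₁ * (x₁ - x₂) * hL + hb

end DividedDifference

theorem MvPowerSeries.X_sub_X_ne_zero {σ R : Type*} [Ring R] [Nontrivial R] {i j : σ}
    (hij : i ≠ j) : (X i - X j : MvPowerSeries σ R) ≠ 0 :=
  sub_ne_zero.mpr (X_inj.not.mpr hij)

/-- With `B(x,y) = (x-y)/(e^x-e^y)` (characterized by `B(x,y)(e^x-e^y) = x-y`,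
and similarly `B(x,z)`, `B(y,z)`), and the divided differences
`B^{(R)}(x,y,z) = (B(x,y)-B(x,z))/(y-z)` and
`B^{(L)}(x,y,z) = (B(x,z)-B(y,z))/(x-y)`, one has
`B^{(R)}(x,y,z) B(y,z) = B(x,y) B^{(L)}(x,y,z)` as formal power series. -/
theorem stmt_4 (B01 B02 B12 BR BL : MvPowerSeries (Fin 3) ℚ)
    (h01 : B01 * (expX 0 - expX 1) = MvPowerSeries.X 0 - MvPowerSeries.X 1)
    (h02 : B02 * (expX 0 - expX 2) = MvPowerSeries.X 0 - MvPowerSeries.X 2)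
    (h12 : B12 * (expX 1 - expX 2) = MvPowerSeries.X 1 - MvPowerSeries.X 2)
    (hR : BR * (MvPowerSeries.X 1 - MvPowerSeries.X 2) = B01 - B02)
    (hL : BL * (MvPowerSeries.X 0 - MvPowerSeries.X 1) = B02 - B12) :
    BR * B12 = B01 * BL := by
  have hx₀₁ := X_sub_X_ne_zero (R := ℚ) (show (0 : Fin 3) ≠ 1 by decide)
  have hx₀₂ := X_sub_X_ne_zero (R := ℚ) (show (0 : Fin 3) ≠ 2 by decide)
  have hx₁₂ := X_sub_X_ne_zero (R := ℚ) (show (1 : Fin 3) ≠ 2 by decide)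
  exact mul_eq_mul_of_divided_differences hR hL
    (mul_sub_add_mul_sub_eq_of_mul_sub_eq h01 h02 h12 hx₀₁ hx₀₂ hx₁₂) hx₀₁ hx₁₂
end

section
/- For each fixed m with 0 ≤ m ≤ n, the sequence c_k := C(k,m) * B_{k-m} (with B_j Bernoulli numbers, and B_j := 0 for j < 0) is the unique solution of the system ∑_{i=0}^{k} c_{k-i} * C(k,i) / (i+1) = δ_{k,m} for all 0 ≤ k ≤ n. -/
/-!
Terms with `k - i < m` vanish, and on the remaining ones
`C(k-i, m) C(k, i) = C(k, m) C(k-m, i)` pulls out the factor `C(k, m)`, reducing the system to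
the case `m = 0`, which is the defining recursion of the Bernoulli numbers (`bernoulli_spec'`).
Uniqueness holds because the system is unitriangular: the `i = 0` coefficient is `1`.
-/

open Finset

theorem sum_range_bernoulli_sub_mul_choose_div_succ (N : ℕ) :
    ∑ i ∈ range (N + 1), bernoulli (N - i) * (N.choose i : ℚ) / (i + 1) =
      if N = 0 then 1 else 0 := by
  rw [← bernoulli_spec', ← Nat.sum_antidiagonal_swap, Nat.sum_antidiagonal_eq_sum_range_succ_mk]
  refine sum_congr rfl fun i hi => ?_
  rw [Prod.swap_prod_mk, Nat.sub_add_cancel (Nat.lt_succ_iff.mp (mem_range.mp hi))]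
  ring

theorem Nat.choose_sub_mul_choose {k m i : ℕ} (h : i + m ≤ k) :
    (k - i).choose m * k.choose i = k.choose m * (k - m).choose i := by
  have hmul := Nat.choose_mul (n := k) (k := k - i) (s := m) (by omega)
  rwa [Nat.choose_symm (by omega), show k - i - m = k - m - i by omega,
    Nat.choose_symm (by omega), mul_comm] at hmul

theorem sum_range_choose_sub_mul_bernoulli (m k : ℕ) :
    ∑ i ∈ range (k + 1),
        ((k - i).choose m : ℚ) * bernoulli (k - i - m) * (k.choose i : ℚ) / (i + 1) =
      if k = m then 1 else 0 := by
  rcases lt_or_ge k m with hk | hk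
  · rw [if_neg hk.ne]
    refine sum_eq_zero fun i _ => ?_
    rw [Nat.choose_eq_zero_of_lt (by omega : k - i < m)]
    simp
  obtain ⟨N, rfl⟩ := Nat.exists_eq_add_of_le hk
  have hvanish : ∀ i ∈ range (m + N + 1), i ∉ range (N + 1) →
      ((m + N - i).choose m : ℚ) * bernoulli (m + N - i - m) * ((m + N).choose i : ℚ) / (i + 1)
        = 0 := by
    intro i hi hiN
    rw [Nat.choose_eq_zero_of_lt (by simp at hi hiN; omega : m + N - i < m)]
    simp
  rw [← sum_subset (range_subset_range.mpr (by omega)) hvanish]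
  calc _ = ∑ i ∈ range (N + 1),
        ((m + N).choose m : ℚ) * (bernoulli (N - i) * (N.choose i : ℚ) / (i + 1)) := by
        refine sum_congr rfl fun i hi => ?_
        have h := Nat.choose_sub_mul_choose (k := m + N) (m := m) (i := i) (by simp at hi; omega)
        rw [Nat.add_sub_cancel_left] at h
        rw [show m + N - i - m = N - i by omega, mul_right_comm _ (bernoulli _), ← Nat.cast_mul, h]
        push_cast
        ring
    _ = _ := by
        rw [← mul_sum, sum_range_bernoulli_sub_mul_choose_div_succ]
        by_cases hN : N = 0 <;> simp [hN]

theorem eq_of_sum_range_mul_choose_div_succ_eq {K : Type*} [DivisionRing K] {n : ℕ}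
    {c d : ℕ → K}
    (h : ∀ k ≤ n, ∑ i ∈ range (k + 1), d (k - i) * (k.choose i : K) / (i + 1) =
      ∑ i ∈ range (k + 1), c (k - i) * (k.choose i : K) / (i + 1)) :
    ∀ k ≤ n, d k = c k := by
  intro k hk
  induction k using Nat.strong_induction_on with
  | _ k ih =>
    have hk' := h k hk
    rw [sum_range_succ', sum_range_succ',
      sum_congr rfl fun i hi => by rw [ih (k - (i + 1)) (by simp at hi; omega) (by omega)]] at hk'
    simpa using hk'

theorem stmt_6_general (n m : ℕ) :
    (∀ k ≤ n, ∑ i ∈ Finset.range (k + 1),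
        (((k - i).choose m : ℚ) * bernoulli (k - i - m)) * (k.choose i : ℚ) / (i + 1)
          = if k = m then 1 else 0) ∧
    (∀ d : ℕ → ℚ,
      (∀ k ≤ n, ∑ i ∈ Finset.range (k + 1),
          d (k - i) * (k.choose i : ℚ) / (i + 1) = if k = m then 1 else 0) →
      ∀ k ≤ n, d k = (k.choose m : ℚ) * bernoulli (k - m)) := by
  refine ⟨fun k _ => sum_range_choose_sub_mul_bernoulli m k, fun d hd => ?_⟩
  refine eq_of_sum_range_mul_choose_div_succ_eq
    (c := fun j => (j.choose m : ℚ) * bernoulli (j - m)) fun k hk => ?_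
  rw [hd k hk, sum_range_choose_sub_mul_bernoulli]

/-- For fixed `0 ≤ m ≤ n`, the sequence `c k = C(k,m) B_{k-m}` (Bernoulli
numbers, vanishing for negative index: here `C(k,m) = 0` for `k < m` takes
care of that) is the unique solution on `{0,…,n}` of the system
`∑_{i=0}^k c_{k-i} C(k,i)/(i+1) = δ_{k,m}`. -/
theorem stmt_6 (n m : ℕ) (hm : m ≤ n) :
    (∀ k ≤ n, ∑ i ∈ Finset.range (k + 1),
        (((k - i).choose m : ℚ) * bernoulli (k - i - m)) * (k.choose i : ℚ) / (i + 1)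
          = if k = m then 1 else 0) ∧
    (∀ d : ℕ → ℚ,
      (∀ k ≤ n, ∑ i ∈ Finset.range (k + 1),
          d (k - i) * (k.choose i : ℚ) / (i + 1) = if k = m then 1 else 0) →
      ∀ k ≤ n, d k = (k.choose m : ℚ) * bernoulli (k - m)) :=
  stmt_6_general n m
end

section
/- Let 𝔤 be a Lie algebra, Q ∈ 𝔤, and define Φ_Q^n(a) := (-ad a)^n Q. Then for all n ≥ 0, k ≥ 0 and a ∈ 𝔤 one has ∑_{i=0}^{n} (1/(i+1)) C(n,i) [Φ_Q^{n-i}(a), Φ_Q^{k+i}(a)] = (1/(n+1)) ∑_{ℓ=0}^{n} (-ad a)^{n-ℓ} [Φ_Q^{ℓ}(a), Φ_Q^{k}(a)]. -/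
private lemma key_sum {R M : Type*} [CommSemiring R] [AddCommMonoid M] [Module R M]
    (D : Module.End R M) (x : ℕ → ℕ → M)
    (h : ∀ p q, D (x p q) = x (p+1) q + x p (q+1)) (k : ℕ) : ∀ n : ℕ,
    ∑ l ∈ Finset.range (n+1), (D ^ (n-l)) (x l k)
      = ∑ i ∈ Finset.range (n+1), (n+1).choose (i+1) • x (n-i) (k+i) := by
  intro n
  induction n with
  | zero => simp
  | succ n ih =>
    have hstep : ∀ l ∈ Finset.range (n+1),
        (D ^ (n+1-l)) (x l k) = D ((D ^ (n-l)) (x l k)) := by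
      intro l hl
      rw [Finset.mem_range] at hl
      rw [show n+1-l = (n-l)+1 from by omega, pow_succ', Module.End.mul_apply]
    rw [Finset.sum_range_succ, Finset.sum_congr rfl hstep, ← map_sum, ih, Nat.sub_self, pow_zero,
      Module.End.one_apply, map_sum]
    have hterm : ∀ i ∈ Finset.range (n+1),
        D ((n+1).choose (i+1) • x (n-i) (k+i)) =
          (n+1).choose (i+1) • x (n+1-i) (k+i) + (n+1).choose (i+1) • x (n-i) (k+(i+1)) := by
      intro i hi
      rw [Finset.mem_range] at hi
      rw [map_nsmul, h, smul_add, show n-i+1 = n+1-i from by omega, Nat.add_assoc]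
    rw [Finset.sum_congr rfl hterm, Finset.sum_add_distrib]
    have hrhs : ∀ i ∈ Finset.range (n+2),
        (n+2).choose (i+1) • x (n+1-i) (k+i) =
          (n+1).choose i • x (n+1-i) (k+i) + (n+1).choose (i+1) • x (n+1-i) (k+i) := by
      intro i _
      rw [Nat.choose_succ_succ, add_smul]
    rw [Finset.sum_congr rfl hrhs, Finset.sum_add_distrib]
    have hS1 : ∑ i ∈ Finset.range (n+2), (n+1).choose i • x (n+1-i) (k+i)
        = (∑ i ∈ Finset.range (n+1), (n+1).choose (i+1) • x (n-i) (k+(i+1))) + x (n+1) k := by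
      rw [Finset.sum_range_succ']
      simp [Nat.succ_sub_succ]
    have hS2 : ∑ i ∈ Finset.range (n+2), (n+1).choose (i+1) • x (n+1-i) (k+i)
        = ∑ i ∈ Finset.range (n+1), (n+1).choose (i+1) • x (n+1-i) (k+i) := by
      rw [Finset.sum_range_succ, Nat.choose_eq_zero_of_lt (by omega)]
      simp
    rw [hS1, hS2]
    abel

/-- For a Lie algebra `𝔤` over a field of characteristic zero, `Q ∈ 𝔤`, and
`Φ_Q^n(a) = (-ad a)^n Q`, the insertion identity
`∑_{i=0}^n C(n,i)/(i+1) [Φ_Q^{n-i}(a), Φ_Q^{k+i}(a)]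
  = (1/(n+1)) ∑_{ℓ=0}^n (-ad a)^{n-ℓ} [Φ_Q^ℓ(a), Φ_Q^k(a)]` holds. -/
theorem stmt_10 {K : Type*} [Field K] [CharZero K]
    {L : Type*} [LieRing L] [LieAlgebra K L] (Q a : L) (n k : ℕ) :
    ∑ i ∈ Finset.range (n + 1), ((n.choose i : K) / (i + 1)) •
        ⁅((-(LieAlgebra.ad K L a)) ^ (n - i)) Q, ((-(LieAlgebra.ad K L a)) ^ (k + i)) Q⁆ =
      ((n : K) + 1)⁻¹ •
        ∑ l ∈ Finset.range (n + 1), ((-(LieAlgebra.ad K L a)) ^ (n - l))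
          ⁅((-(LieAlgebra.ad K L a)) ^ l) Q, ((-(LieAlgebra.ad K L a)) ^ k) Q⁆ := by
  set D : Module.End K L := -(LieAlgebra.ad K L a) with hD
  have hder : ∀ u v : L, D ⁅u, v⁆ = ⁅D u, v⁆ + ⁅u, D v⁆ := by
    intro u v
    rw [hD, LinearMap.neg_apply, LinearMap.neg_apply, LinearMap.neg_apply, LieAlgebra.ad_apply,
      LieAlgebra.ad_apply, LieAlgebra.ad_apply, neg_lie, lie_neg, leibniz_lie]
    abel
  have h : ∀ p q : ℕ, D ⁅(D ^ p) Q, (D ^ q) Q⁆ =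
      ⁅(D ^ (p+1)) Q, (D ^ q) Q⁆ + ⁅(D ^ p) Q, (D ^ (q+1)) Q⁆ := by
    intro p q
    rw [hder, pow_succ', pow_succ', Module.End.mul_apply, Module.End.mul_apply]
  rw [key_sum D (fun p q => ⁅(D ^ p) Q, (D ^ q) Q⁆) h k n, Finset.smul_sum]
  refine Finset.sum_congr rfl fun i hi => ?_
  rw [Finset.mem_range] at hi
  rw [← Nat.cast_smul_eq_nsmul K, smul_smul]
  congr 1
  have hnat : (n+1) * n.choose i = (n+1).choose (i+1) * (i+1) := by
    rw [← Nat.add_one_mul_choose_eq]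
  have h1 : ((i : K) + 1) ≠ 0 := Nat.cast_add_one_ne_zero i
  have h2 : ((n : K) + 1) ≠ 0 := Nat.cast_add_one_ne_zero n
  field_simp
  norm_cast
  rw [mul_comm]
  exact hnat.trans (mul_comm _ _)
end

section
/- Let A be an associative (possibly noncommutative) algebra over a field of characteristic zero, Δ : A → A a linear map, and e ∈ A a fixed element. For a ∈ A let L_a, R_a denote left and right multiplication. If the image of Δ lies in the center of A, then defining Φ_Δ^n(a,…,a) := [[…[Δ, L_a],…], L_a] e (n nested commutators in End(A)), one has the recursion Φ_Δ^{n+1}(a^{⊙(n+1)}) = Φ_Δ^n(a^{⊙(n-1)} ⊙ (a·a)) − 2 Φ_Δ^n(a^{⊙ n}) · a for all n ≥ 1, where Φ_Δ^n(a^{⊙(n-1)} ⊙ (a·a)) is interpreted via the nested-commutator formula with one L_a replaced by L_{a·a}. -/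
/-!
With `L = L_a`, the ring identity `[[D, L], L] = [D, L²] - 2 L [D, L]` holds in `End(A)`, and
`T ↦ [T, L]` commutes with left multiplication by `L`, so `Φ^{n+1} = Φ^n(…, a·a) - 2 a Φ^n`.
Since `D` takes central values, every value of `[[…[D, L_a],…], L_a]` commutes with `a`,
which turns `a Φ^n` into `Φ^n a`.
-/

/-- Iterated commutator with left multiplication: `nestIter a T n` is the
endomorphism `[[…[T, L_a],…], L_a]` with `n` commutators. -/
noncomputable def nestIter {K : Type*} [Field K] {A : Type*} [Ring A] [Algebra K A]
    (a : A) (T : Module.End K A) (n : ℕ) : Module.End K A :=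
  (fun S : Module.End K A => ⁅S, (LinearMap.mulLeft K a : Module.End K A)⁆)^[n] T

theorem lie_lie_self_eq_lie_mul_self_sub {R : Type*} [Ring R] (D L : R) :
    ⁅⁅D, L⁆, L⁆ = ⁅D, L * L⁆ - (2 : ℕ) • (L * ⁅D, L⁆) := by
  simp only [Ring.lie_def]
  noncomm_ring

section nestIter

variable {K : Type*} [Field K] {A : Type*} [Ring A] [Algebra K A] (a : A)

local notation "𝓛" => (LinearMap.mulLeft K a : Module.End K A)

theorem nestIter_succ (T : Module.End K A) (n : ℕ) :
    nestIter a T (n + 1) = nestIter a ⁅T, 𝓛⁆ n :=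
  Function.iterate_succ_apply _ _ _

theorem nestIter_succ' (T : Module.End K A) (n : ℕ) :
    nestIter a T (n + 1) = ⁅nestIter a T n, 𝓛⁆ :=
  Function.iterate_succ_apply' _ _ _

theorem nestIter_sub (S T : Module.End K A) (n : ℕ) :
    nestIter a (S - T) n = nestIter a S n - nestIter a T n := by
  induction n with
  | zero => rfl
  | succ n ih =>
    simp only [nestIter_succ', ih, Ring.lie_def, sub_mul, mul_sub]
    abel

theorem nestIter_nsmul (c : ℕ) (T : Module.End K A) (n : ℕ) :
    nestIter a (c • T) n = c • nestIter a T n := by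
  induction n with
  | zero => rfl
  | succ n ih =>
    simp only [nestIter_succ', ih, Ring.lie_def, smul_mul_assoc, mul_smul_comm, smul_sub]

theorem nestIter_mulLeft_mul (T : Module.End K A) (n : ℕ) :
    nestIter a (𝓛 * T) n = 𝓛 * nestIter a T n := by
  induction n with
  | zero => rfl
  | succ n ih =>
    simp only [nestIter_succ', ih, Ring.lie_def, mul_assoc, mul_sub]

theorem commute_lie_mulLeft_apply {T : Module.End K A} (hT : ∀ x, Commute a (T x)) (x : A) :
    Commute a (⁅T, 𝓛⁆ x) := by
  rw [Ring.lie_def, LinearMap.sub_apply, Module.End.mul_apply, Module.End.mul_apply,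
    LinearMap.mulLeft_apply, LinearMap.mulLeft_apply]
  exact (hT (a * x)).sub_right ((Commute.refl a).mul_right (hT x))

theorem commute_nestIter_apply {T : Module.End K A} (hT : ∀ x, Commute a (T x)) (n : ℕ)
    (x : A) : Commute a (nestIter a T n x) := by
  induction n generalizing x with
  | zero => exact hT x
  | succ n ih => rw [nestIter_succ']; exact commute_lie_mulLeft_apply a ih x

end nestIter

theorem stmt_12_general {K : Type*} [Field K] {A : Type*} [Ring A] [Algebra K A]
    (D : Module.End K A) (e a : A)
    (hD : ∀ x : A, D x ∈ Set.center A) (n : ℕ) (hn : 1 ≤ n) :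
    nestIter a D (n + 1) e =
      nestIter a ⁅D, (LinearMap.mulLeft K (a * a) : Module.End K A)⁆ (n - 1) e
        - (2 : ℕ) • (nestIter a D n e * a) := by
  obtain ⟨m, rfl⟩ : ∃ m, n = m + 1 := ⟨n - 1, by omega⟩
  set L : Module.End K A := LinearMap.mulLeft K a
  have hcomm : Commute a (nestIter a D (m + 1) e) :=
    commute_nestIter_apply a (fun x => ((Set.mem_center_iff.mp (hD x)).comm a).symm) _ e
  have hsplit : nestIter a D (m + 1 + 1) =
      nestIter a ⁅D, L * L⁆ m - (2 : ℕ) • (L * nestIter a D (m + 1)) := by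
    rw [nestIter_succ, nestIter_succ, lie_lie_self_eq_lie_mul_self_sub, nestIter_sub,
      nestIter_nsmul, nestIter_mulLeft_mul, ← nestIter_succ]
  rw [hsplit, LinearMap.mulLeft_mul, Nat.add_sub_cancel, ← hcomm.eq]
  rfl

/-- Recursion for the Koszul brackets in the intermediate case
`Im Δ ⊆ Z(A)`: for `n ≥ 1`,
`Φ_Δ^{n+1}(a^{⊙(n+1)}) = Φ_Δ^n(a^{⊙(n-1)} ⊙ (a·a)) − 2 Φ_Δ^n(a^{⊙n})·a`,
where `Φ_Δ^n(a^{⊙n}) = [[…[Δ, L_a],…], L_a] e` with `n` nested commutators,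
and the insertion of `a·a` is realized by replacing the innermost `L_a`
by `L_{a·a}`. -/
theorem stmt_12 {K : Type*} [Field K] [CharZero K] {A : Type*} [Ring A] [Algebra K A]
    (D : Module.End K A) (e a : A)
    (hD : ∀ x : A, D x ∈ Set.center A) (n : ℕ) (hn : 1 ≤ n) :
    nestIter a D (n + 1) e =
      nestIter a ⁅D, (LinearMap.mulLeft K (a * a) : Module.End K A)⁆ (n - 1) e
        - (2 : ℕ) • (nestIter a D n e * a) :=
  stmt_12_general D e a hD n hn
end

section
/- Suppose complex coefficients c^n_k (0 ≤ k ≤ n) satisfy the two pre-Lie conditions: (i) c^{k+ℓ+m}_k · c^{ℓ+m+1}_{ℓ+1} = c^{k+ℓ+m}_{k+ℓ} · c^{k+ℓ}_k and (ii) c^{k+ℓ+m}_k · c^{ℓ+m+1}_ℓ is symmetric under k ↔ ℓ, i.e. c^{k+ℓ+m}_k · c^{ℓ+m+1}_{ℓ} = c^{k+ℓ+m}_{ℓ} · c^{k+m+1}_{k}, for all k,ℓ,m ≥ 0. If moreover c^0_0 ≠ 0 and c^1_0 ≠ 0, then c^n_0 ≠ 0 for all n, and setting λ_n := ∏_{j=0}^{n−1}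 c^j_0 (λ_0 := 1) one has c^n_k = λ_k λ_{n−k+1} / λ_n for all 0 ≤ k ≤ n. -/
/-- Classification of generic pre-Lie bracket products: if `c n k`
satisfies the two pre-Lie conditions and `c 0 0 ≠ 0`, `c 1 0 ≠ 0`,
then all `c n 0 ≠ 0` and, with `λ_n := ∏_{j<n} c j 0`,
`c n k = λ_k λ_{n−k+1} / λ_n` for all `0 ≤ k ≤ n`. -/
theorem stmt_15 (c : ℕ → ℕ → ℂ)
    (h1 : ∀ k l m : ℕ,
      c (k + l + m) k * c (l + m + 1) (l + 1) = c (k + l + m) (k + l) * c (k + l) k)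
    (h2 : ∀ k l m : ℕ,
      c (k + l + m) k * c (l + m + 1) l = c (k + l + m) l * c (k + m + 1) k)
    (h00 : c 0 0 ≠ 0) (h10 : c 1 0 ≠ 0) :
    (∀ n : ℕ, c n 0 ≠ 0) ∧
    (∀ n k : ℕ, k ≤ n →
      c n k = (∏ j ∈ Finset.range k, c j 0) * (∏ j ∈ Finset.range (n - k + 1), c j 0)
        / (∏ j ∈ Finset.range n, c j 0)) := by
  -- Key relation from (i) with k = 0
  have key : ∀ n k : ℕ, k ≤ n → c n 0 * c (n+1) (k+1) = c n k * c k 0 := by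
    intro n k hk
    have h := h1 0 k (n - k)
    rw [Nat.zero_add, Nat.add_sub_cancel' hk] at h
    simpa using h
  -- nonvanishing of c n 0, together with c n n = c 0 0
  have main : ∀ n : ℕ, c n 0 ≠ 0 ∧ c n n = c 0 0 := by
    intro n
    induction n with
    | zero => exact ⟨h00, rfl⟩
    | succ n ih =>
      obtain ⟨hn0, hnn⟩ := ih
      have hdiag : c (n+1) (n+1) = c 0 0 := by
        have h := key n n le_rfl
        rw [mul_comm (c n n) (c n 0)] at h
        have := mul_left_cancel₀ hn0 h
        rw [this, hnn]
      have h := h2 (n+1) 0 0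
      simp only [Nat.add_zero, Nat.zero_add] at h
      refine ⟨fun hz => ?_, hdiag⟩
      rw [hdiag, hz, zero_mul] at h
      exact mul_ne_zero h00 h10 h
  have nz : ∀ n : ℕ, c n 0 ≠ 0 := fun n => (main n).1
  have pnz : ∀ n : ℕ, (∏ j ∈ Finset.range n, c j 0) ≠ 0 := fun n =>
    Finset.prod_ne_zero_iff.mpr (fun j _ => nz j)
  refine ⟨nz, ?_⟩
  intro n
  induction n with
  | zero =>
    intro k hk
    interval_cases k
    simp [h00]
  | succ n ih =>
    intro k hk
    match k with
    | 0 =>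
      rw [Nat.sub_zero, Finset.prod_range_succ (f := fun j => c j 0) (n + 1)]
      simp only [Finset.range_zero, Finset.prod_empty, one_mul]
      rw [mul_comm, mul_div_assoc, div_self (pnz _), mul_one]
    | k + 1 =>
      have hk' : k ≤ n := Nat.succ_le_succ_iff.mp hk
      have h := key n k hk'
      have hc : c (n+1) (k+1) = c n k * c k 0 / c n 0 := by
        rw [eq_div_iff (nz n)]
        linear_combination h
      rw [hc, ih k hk']
      have hsub : n + 1 - (k + 1) = n - k := by omega
      rw [hsub, Finset.prod_range_succ (f := fun j => c j 0) k,
        Finset.prod_range_succ (f := fun j => c j 0) n]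
      field_simp
end
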